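/- arXiv:nlin/0003007 — 2 statements merged into one kernel-verified Lean document; each statement's English description precedes it below -/
import Mathlib

section
/- Let m ≥ 1 and C_Pert > 0. There exist constants C_rad > 0 (depending only on m) and ε' > 0 (depending on m and C_Pert) such that for every 0 < ε ≤ ε' and every curve V : [−ε, ε] → ℝ^m of the form V(h) = (h, h²/2, …, h^m/m!) + Pert(h), with Pert continuous, Pert(0) = 0, and ‖Pert(h)‖ ≤ C_Pert |h|^{m+1} for all |h| ≤ ε, the convex hull of the set {V(h) : h ∈ [−ε, ε]} contains a closed ball of radius C_rad ε^m in ℝ^m. -/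
/-!
The `m + 1` points `γ (k / (m + 1))` of the moment curve `γ` span `ℝᵐ`: a polynomial of degree
`≤ m` without constant term vanishing at `m + 1` distinct points is zero. So their convex hull
contains a ball `B(c, r)`. Since `γ (ε t) = diag (ε, ε², …, εᵐ) (γ t)`, for `ε ≤ 1` the hull of
the points `γ (ε k / (m + 1))` contains a ball of radius `εᵐ r`. The perturbation moves each of
these points by at most `C_Pert ε^(m+1)`, and a closed convex set `K` with
`B(c, r) ⊆ K + B(0, δ)` contains `B(c, r - δ)`; this leaves a ball of radius `εᵐ r / 2` as soon as
`C_Pert ε ≤ r / 2`.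
-/

open Set

/-- The moment-type curve `h ↦ (h, h²/2, …, hᵐ/m!)` in `ℝᵐ`. -/
noncomputable def momentCurve (m : ℕ) (h : ℝ) : EuclideanSpace ℝ (Fin m) :=
  (WithLp.equiv 2 (Fin m → ℝ)).symm
    (fun n => h ^ ((n : ℕ) + 1) / (Nat.factorial ((n : ℕ) + 1) : ℝ))

open Matrix Metric Polynomial
open scoped RealInnerProductSpace Pointwise

section Cancellation

variable {E : Type*} [NormedAddCommGroup E] [InnerProductSpace ℝ E] [CompleteSpace E]

/- A point `x ∉ K` is separated from `K` by a hyperplane with normal `g`; moving `x` a distance `δ`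
along `g` stays in `closedBall c r` but leaves `K + closedBall 0 δ`. -/
theorem closedBall_sub_subset_of_closedBall_subset_add {K : Set E} (hK : Convex ℝ K)
    (hKc : IsClosed K) {c : E} {r δ : ℝ} (hδ : 0 ≤ δ) (h : closedBall c r ⊆ K + closedBall 0 δ) :
    closedBall c (r - δ) ⊆ K := by
  intro x hx
  by_contra hxK
  obtain ⟨f, u, hfK, hux⟩ := geometric_hahn_banach_closed_point hK hKc hxK
  set g := (InnerProductSpace.toDual ℝ E).symm f
  have hf : ∀ z, f z = ⟪g, z⟫ := fun z => InnerProductSpace.toDual_symm_apply.symm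
  have hbound : ∀ z ∈ closedBall c r, f z < u + δ * ‖g‖ := by
    intro z hz
    obtain ⟨k, hk, b, hb, rfl⟩ := h hz
    have hfb : f b ≤ δ * ‖g‖ := by
      rw [hf, mul_comm]
      exact (real_inner_le_norm g b).trans
        (mul_le_mul_of_nonneg_left (mem_closedBall_zero_iff.mp hb) (norm_nonneg g))
    rw [map_add]
    linarith [hfK k hk]
  have hxr : x ∈ closedBall c r := closedBall_subset_closedBall (by linarith) hx
  have hg : g ≠ 0 := by
    intro hg
    have := hbound x hxr
    simp only [hf, hg, inner_zero_left, norm_zero, mul_zero, add_zero] at this hux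
    linarith
  have hg' : 0 < ‖g‖ := norm_pos_iff.mpr hg
  set w := x + (δ / ‖g‖) • g
  have hw : w ∈ closedBall c r := by
    rw [mem_closedBall, dist_eq_norm] at hx ⊢
    calc ‖x + (δ / ‖g‖) • g - c‖ ≤ ‖x - c‖ + ‖(δ / ‖g‖) • g‖ := by
          rw [add_sub_right_comm]; exact norm_add_le _ _
      _ ≤ r - δ + δ := by
          rw [norm_smul, Real.norm_of_nonneg (by positivity), div_mul_cancel₀ _ hg'.ne']
          linarith
      _ = r := by ring
  have hfw : f w = f x + δ * ‖g‖ := by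
    rw [hf, hf, inner_add_right, real_inner_smul_right, real_inner_self_eq_norm_sq]
    field_simp
  linarith [hbound w hw]

theorem closedBall_sub_subset_convexHull_of_subset_add {s t : Set E} (ht : t.Finite) {c : E}
    {r δ : ℝ} (hδ : 0 ≤ δ) (hst : s ⊆ t + closedBall 0 δ)
    (hs : closedBall c r ⊆ convexHull ℝ s) :
    closedBall c (r - δ) ⊆ convexHull ℝ t := by
  refine closedBall_sub_subset_of_closedBall_subset_add (convex_convexHull ℝ t)
    (ht.isClosed_convexHull ℝ) hδ (hs.trans ?_)
  exact convexHull_min (hst.trans (add_subset_add_right (subset_convexHull ℝ t)))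
    ((convex_convexHull ℝ t).add (convex_closedBall 0 δ))

end Cancellation

theorem exists_closedBall_subset_convexHull {E : Type*} [NormedAddCommGroup E]
    [NormedSpace ℝ E] [FiniteDimensional ℝ E] {s : Set E} (h0 : (0 : E) ∈ s)
    (hs : Submodule.span ℝ s = ⊤) :
    ∃ c, ∃ r > 0, closedBall c r ⊆ convexHull ℝ s := by
  have hvec : vectorSpan ℝ s = ⊤ := by
    simpa [vectorSpan_eq_span_vsub_set_right ℝ h0] using hs
  have hint : (interior (convexHull ℝ s)).Nonempty := by
    rw [(convex_convexHull ℝ s).interior_nonempty_iff_affineSpan_eq_top, affineSpan_convexHull,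
      AffineSubspace.affineSpan_eq_top_iff_vectorSpan_eq_top_of_nonempty ℝ E E ⟨0, h0⟩]
    exact hvec
  obtain ⟨c, hc⟩ := hint
  obtain ⟨r, hr, hball⟩ := nhds_basis_closedBall.mem_iff.mp (mem_interior_iff_mem_nhds.mp hc)
  exact ⟨c, r, hr, hball⟩

section Diagonal

open scoped Matrix.Norms.L2Operator

variable {ι : Type*} [Fintype ι] [DecidableEq ι]

theorem toEuclideanCLM_diagonal_mul_diagonal_eq_one {b b' : ι → ℝ} (h : ∀ i, b i * b' i = 1) :
    toEuclideanCLM (𝕜 := ℝ) (diagonal b) * toEuclideanCLM (𝕜 := ℝ) (diagonal b') = 1 := by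
  rw [← map_mul, diagonal_mul_diagonal, funext h, diagonal_one, map_one]

theorem closedBall_subset_image_toEuclideanCLM_diagonal {a : ι → ℝ} {μ : ℝ} (hμ : 0 < μ)
    (ha : ∀ i, μ ≤ |a i|) (c : EuclideanSpace ℝ ι) (r : ℝ) :
    closedBall (toEuclideanCLM (𝕜 := ℝ) (diagonal a) c) (μ * r) ⊆
      toEuclideanCLM (𝕜 := ℝ) (diagonal a) '' closedBall c r := by
  set D := toEuclideanCLM (𝕜 := ℝ) (diagonal a)
  set D' := toEuclideanCLM (𝕜 := ℝ) (diagonal a⁻¹)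
  have ha0 : ∀ i, a i ≠ 0 := fun i => abs_pos.mp (hμ.trans_le (ha i))
  have hDD' : D * D' = 1 :=
    toEuclideanCLM_diagonal_mul_diagonal_eq_one fun i => mul_inv_cancel₀ (ha0 i)
  have hD'D : D' * D = 1 :=
    toEuclideanCLM_diagonal_mul_diagonal_eq_one fun i => inv_mul_cancel₀ (ha0 i)
  have hD'norm : ‖D'‖ ≤ μ⁻¹ := by
    rw [l2_opNorm_toEuclideanCLM, l2_opNorm_diagonal]
    refine (pi_norm_le_iff_of_nonneg (by positivity)).mpr fun i => ?_
    rw [Pi.inv_apply, norm_inv, Real.norm_eq_abs]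
    exact inv_anti₀ hμ (ha i)
  intro y hy
  refine ⟨D' y, ?_, by simpa using congr($hDD' y)⟩
  rw [mem_closedBall, dist_eq_norm] at hy ⊢
  have : D' y - c = D' (y - D c) := by
    rw [map_sub, ← mul_apply_eq_comp, hD'D, one_apply_eq_self]
  calc ‖D' y - c‖ ≤ ‖D'‖ * ‖y - D c‖ := this ▸ D'.le_opNorm _
    _ ≤ μ⁻¹ * (μ * r) := by gcongr
    _ = r := by field_simp

end Diagonal

@[simp]
theorem momentCurve_zero (m : ℕ) : momentCurve m 0 = 0 := by
  ext n
  simp [momentCurve]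

theorem momentCurve_mul (m : ℕ) (ε t : ℝ) :
    momentCurve m (ε * t) =
      toEuclideanCLM (𝕜 := ℝ) (diagonal fun n : Fin m => ε ^ ((n : ℕ) + 1)) (momentCurve m t) := by
  ext n
  simp [momentCurve, mulVec_diagonal, mul_pow, mul_div_assoc]

theorem span_range_momentCurve_eq_top {m : ℕ} {ι : Type*} [Fintype ι] {f : ι → ℝ}
    (hf : Function.Injective f) (hcard : m < Fintype.card ι) :
    Submodule.span ℝ (range fun i => momentCurve m (f i)) = ⊤ := by
  rw [← Submodule.orthogonal_eq_bot_iff, eq_bot_iff]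
  intro g hg
  set P : ℝ[X] := ∑ n : Fin m, C (g n / ((n : ℕ) + 1).factorial) * X ^ ((n : ℕ) + 1)
  have hPeval : ∀ t, P.eval t = ⟪momentCurve m t, g⟫ := by
    intro t
    simp only [P, eval_finsetSum, eval_mul, eval_C, eval_pow, eval_X, PiLp.inner_apply]
    refine Finset.sum_congr rfl fun n _ => ?_
    simp only [momentCurve, WithLp.equiv_symm_apply, RCLike.inner_apply, map_div₀,
      Real.ringHom_apply, map_natCast]
    ring
  have hP : P = 0 := by
    refine P.eq_zero_of_natDegree_lt_card_of_eval_eq_zero hf (fun i => ?_) ?_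
    · rw [hPeval]
      exact (Submodule.mem_orthogonal _ g).mp hg _ (Submodule.subset_span ⟨i, rfl⟩)
    · refine lt_of_le_of_lt (natDegree_sum_le_of_forall_le _ _ fun n _ => ?_) hcard
      exact (natDegree_C_mul_X_pow_le _ _).trans n.isLt
  ext n
  have hcoeff := congr_arg (coeff · ((n : ℕ) + 1)) hP
  simpa [P, Fin.val_inj, Nat.factorial_ne_zero] using hcoeff

theorem closedBall_subset_convexHull_momentCurve_mul {m : ℕ} {ι : Type*} {f : ι → ℝ}
    {c : EuclideanSpace ℝ (Fin m)} {r ε : ℝ} (hε : 0 < ε) (hε₁ : ε ≤ 1)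
    (h : closedBall c r ⊆ convexHull ℝ (range fun i => momentCurve m (f i))) :
    closedBall (toEuclideanCLM (𝕜 := ℝ) (diagonal fun n : Fin m => ε ^ ((n : ℕ) + 1)) c)
        (ε ^ m * r) ⊆ convexHull ℝ (range fun i => momentCurve m (ε * f i)) := by
  set D := toEuclideanCLM (𝕜 := ℝ) (diagonal fun n : Fin m => ε ^ ((n : ℕ) + 1))
  have hD : D '' (range fun i => momentCurve m (f i)) = range fun i => momentCurve m (ε * f i) := by
    rw [← range_comp]
    exact congrArg range (funext fun i => (momentCurve_mul m ε (f i)).symm)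
  have hpow : ∀ n : Fin m, ε ^ m ≤ |ε ^ ((n : ℕ) + 1)| := fun n => by
    rw [abs_of_pos (by positivity)]
    exact pow_le_pow_of_le_one hε.le hε₁ n.isLt
  calc closedBall (D c) (ε ^ m * r) ⊆ D '' closedBall c r :=
        closedBall_subset_image_toEuclideanCLM_diagonal (by positivity) hpow c r
    _ ⊆ D '' convexHull ℝ (range fun i => momentCurve m (f i)) := image_mono h
    _ = convexHull ℝ (range fun i => momentCurve m (ε * f i)) := by
        rw [← hD]
        exact D.toLinearMap.image_convexHull _

theorem exists_closedBall_subset_convexHull_momentCurve (m : ℕ) :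
    ∃ c, ∃ r > 0, closedBall c r ⊆
      convexHull ℝ (range fun k : Fin (m + 1) => momentCurve m (k / (m + 1))) := by
  refine exists_closedBall_subset_convexHull ⟨0, by simp⟩
    (span_range_momentCurve_eq_top (fun k l hkl => ?_) (by simp))
  simpa [div_left_inj' (by positivity : (m : ℝ) + 1 ≠ 0), Fin.val_inj] using hkl

theorem statement11_general (m : ℕ) :
    ∃ Crad > (0:ℝ), ∀ CPert > (0:ℝ), ∃ ε' > (0:ℝ),
      ∀ ε : ℝ, 0 < ε → ε ≤ ε' →
        ∀ Pert : ℝ → EuclideanSpace ℝ (Fin m),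
          ContinuousOn Pert (Icc (-ε) ε) → Pert 0 = 0 →
          (∀ h ∈ Icc (-ε) ε, ‖Pert h‖ ≤ CPert * |h| ^ (m + 1)) →
          ∃ c, Metric.closedBall c (Crad * ε ^ m) ⊆
            convexHull ℝ ((fun h => momentCurve m h + Pert h) '' Icc (-ε) ε) := by
  obtain ⟨c, r, hr, hball⟩ := exists_closedBall_subset_convexHull_momentCurve m
  refine ⟨r / 2, by positivity, fun CPert hCPert => ⟨min 1 (r / (2 * CPert)), by positivity,
    fun ε hε hεε' Pert _ _ hPert => ?_⟩⟩
  set p : Fin (m + 1) → ℝ := fun k => ε * (k / (m + 1))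
  have hp : ∀ k, p k ∈ Icc (-ε) ε := fun k => by
    have hk₀ : 0 ≤ (k : ℝ) / (m + 1) := by positivity
    have hk₁ : (k : ℝ) / (m + 1) ≤ 1 :=
      div_le_one_of_le₀ (by exact_mod_cast k.isLt.le) (by positivity)
    exact ⟨by nlinarith, mul_le_of_le_one_right hε.le hk₁⟩
  have hclose : (range fun k => momentCurve m (p k)) ⊆
      (range fun k => momentCurve m (p k) + Pert (p k)) + closedBall 0 (CPert * ε ^ (m + 1)) := by
    rintro _ ⟨k, rfl⟩
    refine ⟨_, ⟨k, rfl⟩, -Pert (p k), ?_, add_neg_cancel_right _ _⟩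
    rw [mem_closedBall_zero_iff, norm_neg]
    exact (hPert _ (hp k)).trans (by gcongr; exact abs_le.mpr (hp k))
  have hradius : r / 2 * ε ^ m ≤ ε ^ m * r - CPert * ε ^ (m + 1) := by
    have := hεε'.trans (min_le_right _ _)
    rw [le_div_iff₀ (by positivity)] at this
    rw [pow_succ]
    nlinarith [pow_pos hε m]
  refine ⟨_, (closedBall_subset_closedBall hradius).trans <|
    (closedBall_sub_subset_convexHull_of_subset_add (finite_range _) (by positivity) hclose
      (closedBall_subset_convexHull_momentCurve_mul hε (hεε'.trans (min_le_left _ _)) hball)).trans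
    (convexHull_mono ?_)⟩
  rintro _ ⟨k, rfl⟩
  exact ⟨p k, hp k, rfl⟩

/-- **Proposition JJ13.** There is a constant `C_rad > 0` depending only on `m` such that
for every `C_Pert > 0` there is `ε' > 0` (depending on `m` and `C_Pert`) such that for all
`0 < ε ≤ ε'` and every curve `V(h) = (h, h²/2, …, hᵐ/m!) + Pert(h)` on `[-ε, ε]` with
`Pert` continuous, `Pert 0 = 0`, and `‖Pert h‖ ≤ C_Pert |h|^{m+1}`, the convex hull of
`{V(h) : h ∈ [-ε, ε]}` contains a closed ball of radius `C_rad εᵐ`. -/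
theorem statement11 (m : ℕ) (hm : 1 ≤ m) :
    ∃ Crad > (0:ℝ), ∀ CPert > (0:ℝ), ∃ ε' > (0:ℝ),
      ∀ ε : ℝ, 0 < ε → ε ≤ ε' →
        ∀ Pert : ℝ → EuclideanSpace ℝ (Fin m),
          ContinuousOn Pert (Icc (-ε) ε) → Pert 0 = 0 →
          (∀ h ∈ Icc (-ε) ε, ‖Pert h‖ ≤ CPert * |h| ^ (m + 1)) →
          ∃ c, Metric.closedBall c (Crad * ε ^ m) ⊆
            convexHull ℝ ((fun h => momentCurve m h + Pert h) '' Icc (-ε) ε) :=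
  statement11_general m
end

section
/- Let f : [0,1]² → [0,1]² and π : [0,1]² → ℝ^5 be C^3, and let P = π(p) be a point such that π^{-1}(P) = {p} and the five vectors π_x(p), π_y(p), π_{xx}(p), π_{xy}(p), π_{yy}(p) are linearly independent in ℝ^5. Let p_0, p_1, … ∈ [0,1]² be a trajectory of f and P_i = π(p_i). If the set {P_0, P_1, …} ⊆ ℝ^5 has d distinct fractal approach directions at P, then the set {p_0, p_1, …} ⊆ ℝ² has d distinct fractal approach directions at p. -/
open Set Filter Topology

/-- The unit square `[0,1]²` in the Euclidean plane. -/
def unitSq : Set (EuclideanSpace ℝ (Fin 2)) := {x | ∀ i, x i ∈ Set.Icc (0:ℝ) 1}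

/-- The standard basis direction `eₓ = (1,0)` of the plane. -/
noncomputable def ex : EuclideanSpace ℝ (Fin 2) := EuclideanSpace.single 0 1

/-- The standard basis direction `e_y = (0,1)` of the plane. -/
noncomputable def ey : EuclideanSpace ℝ (Fin 2) := EuclideanSpace.single 1 1

/-- A set `S` has the fractal approach direction `l` (a unit vector) at the base point `P`:
there is a sequence of points of `S`, different from `P`, converging to `P`, whose
normalized differences from `P` converge to `l`, and whose distances to `P` shrink
geometrically: `C⁻ ≤ ‖Q_{k+1} − P‖/‖Q_k − P‖ ≤ C⁺` with `0 < C⁻ ≤ C⁺ < 1`. -/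
def HasFractalApproachDirection {E : Type*} [NormedAddCommGroup E] [NormedSpace ℝ E]
    (S : Set E) (P l : E) : Prop :=
  ‖l‖ = 1 ∧ ∃ Q : ℕ → E, (∀ k, Q k ∈ S) ∧ (∀ k, Q k ≠ P) ∧
    Filter.Tendsto Q Filter.atTop (nhds P) ∧
    Filter.Tendsto (fun k => ‖Q k - P‖⁻¹ • (Q k - P)) Filter.atTop (nhds l) ∧
    ∃ Cminus Cplus : ℝ, 0 < Cminus ∧ Cminus ≤ Cplus ∧ Cplus < 1 ∧
      ∀ k, Cminus ≤ ‖Q (k + 1) - P‖ / ‖Q k - P‖ ∧ ‖Q (k + 1) - P‖ / ‖Q k - P‖ ≤ Cplus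

/-- `S` has `d` distinct fractal approach directions at `P`. -/
def HasDistinctFractalApproachDirections {E : Type*} [NormedAddCommGroup E]
    [NormedSpace ℝ E] (S : Set E) (P : E) (d : ℕ) : Prop :=
  ∃ l : Fin d → E, (∀ i, HasFractalApproachDirection S P (l i)) ∧
    ∀ i j, i ≠ j → l i ≠ l j ∧ l i ≠ -l j

/-! Injectivity of `ψ` over `P` on the compact square turns `ψ(q_k) → P` into `q_k → p`. The
derivative `A = Dψ(p)` is injective, since `A eₓ, A e_y` are independent. Differentiating along
`q_k` shows that every limit point `m` of the directions `(q_k - p)/‖q_k - p‖` satisfies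
`A m/‖A m‖ = L`, which pins down a unique unit vector `l`; moreover
`‖ψ(q_k) - P‖/‖q_k - p‖ → ‖A l‖ > 0`, so the geometric ratio bounds survive, with relaxed
constants, after finitely many terms. As `l ↦ A l/‖A l‖` is odd and injective on the sphere,
distinct directions pull back to distinct directions. -/

lemma IsCompact.tendsto_of_tendsto_comp {X Y ι : Type*} [TopologicalSpace X] [TopologicalSpace Y]
    [T2Space Y] {K : Set X} (hK : IsCompact K) {g : X → Y} (hg : ContinuousOn g K) {a : X}
    (ha : ∀ x ∈ K, g x = g a → x = a) {l : Filter ι} {u : ι → X} (hu : ∀ᶠ i in l, u i ∈ K)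
    (h : Tendsto (g ∘ u) l (𝓝 (g a))) : Tendsto u l (𝓝 a) := by
  refine hK.tendsto_nhds_of_unique_mapClusterPt hu fun x hxK hx => ha x hxK ?_
  have hgx : MapClusterPt (g x) l (g ∘ u) := by
    refine hx.tendsto_comp' ((hg x hxK).mono_left (inf_le_inf_left _ ?_))
    exact le_principal_iff.2 hu
  exact eq_of_nhds_neBot (hgx.clusterPt.mono h)

lemma eventually_ratio_bounds_of_tendsto_div {a b : ℕ → ℝ} (ha : ∀ k, 0 < a k)
    (hb : ∀ k, 0 < b k) {c : ℝ} (hc : 0 < c) (hab : Tendsto (fun k => a k / b k) atTop (𝓝 c))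
    {Cm Cp : ℝ} (hCm : 0 < Cm) (hCp : Cp < 1)
    (hratio : ∀ k, Cm ≤ a (k + 1) / a k ∧ a (k + 1) / a k ≤ Cp) :
    ∀ᶠ k in atTop, Cm / 2 ≤ b (k + 1) / b k ∧ b (k + 1) / b k ≤ (1 + Cp) / 2 := by
  have hCp0 : 0 < Cp := hCm.trans_le ((hratio 0).1.trans (hratio 0).2)
  have hρ : Tendsto (fun k => (a k / b k) / (a (k + 1) / b (k + 1))) atTop (𝓝 1) := by
    have h := hab.div (hab.comp (tendsto_add_atTop_nat 1)) hc.ne'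
    rwa [div_self hc.ne'] at h
  have hρ_bound : (1 : ℝ) < (1 + Cp) / (2 * Cp) := by
    rw [lt_div_iff₀ (by positivity)]; linarith
  filter_upwards [hρ.eventually (Ioo_mem_nhds (by norm_num : (1 / 2 : ℝ) < 1) hρ_bound)]
    with k ⟨hρ_low, hρ_high⟩
  rw [lt_div_iff₀ (by positivity)] at hρ_high
  have hsplit : b (k + 1) / b k = a (k + 1) / a k * ((a k / b k) / (a (k + 1) / b (k + 1))) := by
    have := ha k; have := ha (k + 1); have := hb k; have := hb (k + 1)
    field_simp
  obtain ⟨hlow, hhigh⟩ := hratio k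
  rw [hsplit]
  constructor <;> nlinarith

section

variable {E F : Type*} [NormedAddCommGroup E] [NormedSpace ℝ E]
  [NormedAddCommGroup F] [NormedSpace ℝ F]

lemma inv_norm_smul_pos_smul {t : ℝ} (ht : 0 < t) (v : E) :
    ‖t • v‖⁻¹ • (t • v) = ‖v‖⁻¹ • v := by
  rcases eq_or_ne v 0 with rfl | hv
  · simp
  exact (SameRay.sameRay_pos_smul_left v ht).inv_norm_smul_eq (smul_ne_zero ht.ne' hv) hv

lemma eq_of_inv_norm_smul_apply_eq {A : E →L[ℝ] F} (hA : Function.Injective A) {m l : E}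
    (hm : ‖m‖ = 1) (hl : ‖l‖ = 1) (h : ‖A m‖⁻¹ • A m = ‖A l‖⁻¹ • A l) : m = l := by
  have hne : ∀ {v : E}, ‖v‖ = 1 → A v ≠ 0 := fun hv h0 => by
    simp [(map_eq_zero_iff A hA).1 h0] at hv
  have hray : SameRay ℝ (A m) (A l) :=
    (sameRay_iff_inv_norm_smul_eq_of_ne (hne hm) (hne hl)).2 h
  exact (hA.sameRay_map_iff.1 hray).eq_of_norm_eq (hm.trans hl.symm)

lemma HasFDerivWithinAt.tendsto_inv_norm_smul_sub {ψ : E → F} {A : E →L[ℝ] F} {s : Set E} {p : E}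
    (hder : HasFDerivWithinAt ψ A s p) {ι : Type*} {l : Filter ι} {q : ι → E}
    (hqs : ∀ᶠ i in l, q i ∈ s) (hq : Tendsto q l (𝓝 p)) {v : E}
    (hv : Tendsto (fun i => ‖q i - p‖⁻¹ • (q i - p)) l (𝓝 v)) :
    Tendsto (fun i => ‖q i - p‖⁻¹ • (ψ (q i) - ψ p)) l (𝓝 (A v)) := by
  have h := hder.lim (c := fun i => ‖q i - p‖⁻¹) (sub_self p ▸ hq.sub_const p)
    (by simpa using hqs) hv
  simpa using h


lemma HasFractalApproachDirection.of_eventually {S : Set E} {P l : E} (hl : ‖l‖ = 1)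
    {Q : ℕ → E} (hQS : ∀ k, Q k ∈ S) (hQP : ∀ k, Q k ≠ P) (hQ : Tendsto Q atTop (𝓝 P))
    (hdir : Tendsto (fun k => ‖Q k - P‖⁻¹ • (Q k - P)) atTop (𝓝 l)) {Cm Cp : ℝ}
    (hCm : 0 < Cm) (hCmp : Cm ≤ Cp) (hCp : Cp < 1)
    (hratio : ∀ᶠ k in atTop,
      Cm ≤ ‖Q (k + 1) - P‖ / ‖Q k - P‖ ∧ ‖Q (k + 1) - P‖ / ‖Q k - P‖ ≤ Cp) :
    HasFractalApproachDirection S P l := by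
  obtain ⟨N, hN⟩ := eventually_atTop.1 hratio
  refine ⟨hl, fun k => Q (k + N), fun k => hQS _, fun k => hQP _,
    hQ.comp (tendsto_add_atTop_nat N), hdir.comp (tendsto_add_atTop_nat N),
    Cm, Cp, hCm, hCmp, hCp, fun k => ?_⟩
  simpa only [add_right_comm k 1 N] using hN (k + N) le_add_self

variable [FiniteDimensional ℝ E]

lemma HasFDerivWithinAt.exists_tendsto_direction {ψ : E → F} {A : E →L[ℝ] F} {s : Set E} {p : E}
    (hder : HasFDerivWithinAt ψ A s p) (hA : Function.Injective A) {q : ℕ → E}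
    (hqs : ∀ k, q k ∈ s) (hqp : ∀ k, q k ≠ p) (hq : Tendsto q atTop (𝓝 p)) {L : F}
    (hL : Tendsto (fun k => ‖ψ (q k) - ψ p‖⁻¹ • (ψ (q k) - ψ p)) atTop (𝓝 L)) :
    ∃ l, ‖l‖ = 1 ∧ L = ‖A l‖⁻¹ • A l ∧
      Tendsto (fun k => ‖q k - p‖⁻¹ • (q k - p)) atTop (𝓝 l) := by
  set u := fun k => ‖q k - p‖⁻¹ • (q k - p)
  have hu : ∀ k, u k ∈ Metric.sphere (0 : E) 1 := fun k => by
    simp [u, norm_smul, inv_mul_cancel₀ (norm_ne_zero_iff.2 (sub_ne_zero.2 (hqp k)))]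
  have hlim : ∀ m ∈ Metric.sphere (0 : E) 1, MapClusterPt m atTop u → L = ‖A m‖⁻¹ • A m := by
    intro m hm hmu
    obtain ⟨φ, hφ, hum⟩ := hmu.tendsto_subseq
    have hw := hder.tendsto_inv_norm_smul_sub (Eventually.of_forall fun k => hqs (φ k))
      (hq.comp hφ.tendsto_atTop) hum
    have hAm : A m ≠ 0 := (map_ne_zero_iff A hA).2 (ne_zero_of_mem_unit_sphere ⟨m, hm⟩)
    have hnormalize : Tendsto (fun w : F => ‖w‖⁻¹ • w) (𝓝 (A m)) (𝓝 (‖A m‖⁻¹ • A m)) :=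
      ((continuous_norm.tendsto _).inv₀ (norm_ne_zero_iff.2 hAm)).smul tendsto_id
    refine tendsto_nhds_unique (hL.comp hφ.tendsto_atTop) ((hnormalize.comp hw).congr fun k => ?_)
    exact inv_norm_smul_pos_smul (inv_pos.2 (norm_pos_iff.2 (sub_ne_zero.2 (hqp (φ k))))) _
  obtain ⟨l, hl, hlu⟩ := (isCompact_sphere (0 : E) 1).exists_mapClusterPt
    (f := atTop) (tendsto_principal.2 (Eventually.of_forall hu))
  have hl1 : ‖l‖ = 1 := by simpa using hl
  refine ⟨l, hl1, hlim l hl hlu, (isCompact_sphere (0 : E) 1).tendsto_nhds_of_unique_mapClusterPt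
    (Eventually.of_forall (f := atTop) hu) fun m hm hmu => ?_⟩
  exact eq_of_inv_norm_smul_apply_eq hA (by simpa using hm) hl1
    ((hlim m hm hmu).symm.trans (hlim l hl hlu))

variable {ψ : E → F} {K : Set E} {p : E} {A : E →L[ℝ] F} {S : Set E}

theorem HasFractalApproachDirection.exists_of_image (hK : IsCompact K) (hψ : ContinuousOn ψ K)
    (hinj : ∀ x ∈ K, ψ x = ψ p → x = p) (hder : HasFDerivWithinAt ψ A K p)
    (hA : Function.Injective A) (hSK : S ⊆ K) {L : F}
    (hL : HasFractalApproachDirection (ψ '' S) (ψ p) L) :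
    ∃ l, L = ‖A l‖⁻¹ • A l ∧ HasFractalApproachDirection S p l := by
  obtain ⟨-, Q, hQS, hQP, hQ, hQdir, Cm, Cp, hCm, hCmp, hCp, hQratio⟩ := hL
  choose q hqS hqQ using hQS
  obtain rfl : (fun k => ψ (q k)) = Q := funext hqQ
  have hqK : ∀ k, q k ∈ K := fun k => hSK (hqS k)
  have hqp : ∀ k, q k ≠ p := fun k h => hQP k (congrArg ψ h)
  have hq : Tendsto q atTop (𝓝 p) :=
    hK.tendsto_of_tendsto_comp hψ hinj (Eventually.of_forall hqK) hQ
  obtain ⟨l, hl, hLl, hdir⟩ := hder.exists_tendsto_direction hA hqK hqp hq hQdir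
  have hAl : 0 < ‖A l‖ :=
    norm_pos_iff.2 ((map_ne_zero_iff A hA).2 (norm_ne_zero_iff.1 (by simp [hl])))
  have hquot : Tendsto (fun k => ‖ψ (q k) - ψ p‖ / ‖q k - p‖) atTop (𝓝 ‖A l‖) := by
    simpa [norm_smul, div_eq_inv_mul] using
      (hder.tendsto_inv_norm_smul_sub (Eventually.of_forall hqK) hq hdir).norm
  have hratio := eventually_ratio_bounds_of_tendsto_div
    (fun k => norm_pos_iff.2 (sub_ne_zero.2 (hQP k)))
    (fun k => norm_pos_iff.2 (sub_ne_zero.2 (hqp k))) hAl hquot hCm hCp hQratio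
  exact ⟨l, hLl, .of_eventually hl hqS hqp hq hdir (by linarith) (by linarith) (by linarith) hratio⟩

theorem HasDistinctFractalApproachDirections.of_image (hK : IsCompact K) (hψ : ContinuousOn ψ K)
    (hinj : ∀ x ∈ K, ψ x = ψ p → x = p) (hder : HasFDerivWithinAt ψ A K p)
    (hA : Function.Injective A) (hSK : S ⊆ K) {d : ℕ}
    (h : HasDistinctFractalApproachDirections (ψ '' S) (ψ p) d) :
    HasDistinctFractalApproachDirections S p d := by
  obtain ⟨L, hL, hLdist⟩ := h
  choose l hLl hl using fun i => (hL i).exists_of_image hK hψ hinj hder hA hSK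
  refine ⟨l, hl, fun i j hij => ⟨fun h => (hLdist i j hij).1 ?_, fun h => (hLdist i j hij).2 ?_⟩⟩
  · rw [hLl i, hLl j, h]
  · rw [hLl i, hLl j, h, map_neg, norm_neg, smul_neg]

end

lemma injective_of_linearIndependent_apply_ex_ey {F : Type*} [AddCommGroup F] [Module ℝ F]
    (A : EuclideanSpace ℝ (Fin 2) →ₗ[ℝ] F) (h : LinearIndependent ℝ ![A ex, A ey]) :
    Function.Injective A := by
  have hbasis : ⇑(EuclideanSpace.basisFun (Fin 2) ℝ) = ![ex, ey] := by
    funext i; fin_cases i <;> simp [ex, ey]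
  refine LinearMap.injective_of_linearIndependent (v := ![ex, ey]) ?_ ?_
  · rw [← hbasis]; exact (EuclideanSpace.basisFun (Fin 2) ℝ).toBasis.span_eq
  · rwa [show ⇑A ∘ ![ex, ey] = ![A ex, A ey] by funext i; fin_cases i <;> rfl]

lemma unitSq_eq_preimage_pi :
    unitSq = EuclideanSpace.equiv (Fin 2) ℝ ⁻¹' Set.univ.pi fun _ => Set.Icc 0 1 := by
  ext x; exact Set.mem_univ_pi.symm

lemma isCompact_unitSq : IsCompact unitSq := by
  rw [unitSq_eq_preimage_pi]
  exact (EuclideanSpace.equiv (Fin 2) ℝ).toHomeomorph.isCompact_preimage.2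
    (isCompact_univ_pi fun _ => isCompact_Icc)

lemma uniqueDiffOn_unitSq : UniqueDiffOn ℝ unitSq := by
  rw [unitSq_eq_preimage_pi]
  refine uniqueDiffOn_convex ((convex_pi fun _ _ => convex_Icc 0 1).linear_preimage
    (EuclideanSpace.equiv (Fin 2) ℝ).toLinearMap) ⟨WithLp.toLp 2 fun _ => 1 / 2, ?_⟩
  refine preimage_interior_subset_interior_preimage (EuclideanSpace.equiv (Fin 2) ℝ).continuous ?_
  rw [interior_pi_set Set.finite_univ, Set.mem_preimage, Set.mem_univ_pi]
  intro i
  rw [interior_Icc]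
  exact ⟨by norm_num, by norm_num⟩

theorem statement13_general
    (ψ : EuclideanSpace ℝ (Fin 2) → EuclideanSpace ℝ (Fin 5))
    (hψ : ContDiffOn ℝ 3 ψ unitSq)
    (p : EuclideanSpace ℝ (Fin 2)) (hp : p ∈ unitSq)
    (P : EuclideanSpace ℝ (Fin 5)) (hP : P = ψ p)
    (hinj : ∀ x ∈ unitSq, ψ x = P → x = p)
    (hindep : LinearIndependent ℝ
      ![iteratedFDerivWithin ℝ 1 ψ unitSq p ![ex],
        iteratedFDerivWithin ℝ 1 ψ unitSq p ![ey],
        iteratedFDerivWithin ℝ 2 ψ unitSq p ![ex, ex],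
        iteratedFDerivWithin ℝ 2 ψ unitSq p ![ex, ey],
        iteratedFDerivWithin ℝ 2 ψ unitSq p ![ey, ey]])
    (traj : ℕ → EuclideanSpace ℝ (Fin 2)) (htrajmem : ∀ i, traj i ∈ unitSq)
    (d : ℕ)
    (happr : HasDistinctFractalApproachDirections (Set.range fun i => ψ (traj i)) P d) :
    HasDistinctFractalApproachDirections (Set.range traj) p d := by
  subst hP
  set A := fderivWithin ℝ ψ unitSq p
  have hder : HasFDerivWithinAt ψ A unitSq p :=
    (hψ.differentiableOn (by norm_num) p hp).hasFDerivWithinAt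
  have hA : Function.Injective A := by
    refine injective_of_linearIndependent_apply_ex_ey A.toLinearMap ?_
    have h := hindep.comp ![0, 1] (by decide)
    simp only [iteratedFDerivWithin_one_apply (uniqueDiffOn_unitSq p hp)] at h
    convert h using 1; funext i; fin_cases i <;> rfl
  rw [Set.range_comp' ψ traj] at happr
  exact happr.of_image isCompact_unitSq hψ.continuousOn hinj hder hA
    (Set.range_subset_iff.2 htrajmem)

/-- **Lemma JJ14.** If the reconstructed trajectory `P_i = ψ(p_i)` has `d` distinct fractal
approach directions at `P = ψ(p)`, then the underlying trajectory `p_i` has `d` distinct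
fractal approach directions at `p`. -/
theorem statement13
    (f : EuclideanSpace ℝ (Fin 2) → EuclideanSpace ℝ (Fin 2))
    (ψ : EuclideanSpace ℝ (Fin 2) → EuclideanSpace ℝ (Fin 5))
    (hfmaps : MapsTo f unitSq unitSq)
    (hf : ContDiffOn ℝ 3 f unitSq)
    (hψ : ContDiffOn ℝ 3 ψ unitSq)
    (p : EuclideanSpace ℝ (Fin 2)) (hp : p ∈ unitSq)
    (P : EuclideanSpace ℝ (Fin 5)) (hP : P = ψ p)
    (hinj : ∀ x ∈ unitSq, ψ x = P → x = p)
    (hindep : LinearIndependent ℝ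
      ![iteratedFDerivWithin ℝ 1 ψ unitSq p ![ex],
        iteratedFDerivWithin ℝ 1 ψ unitSq p ![ey],
        iteratedFDerivWithin ℝ 2 ψ unitSq p ![ex, ex],
        iteratedFDerivWithin ℝ 2 ψ unitSq p ![ex, ey],
        iteratedFDerivWithin ℝ 2 ψ unitSq p ![ey, ey]])
    (traj : ℕ → EuclideanSpace ℝ (Fin 2)) (htrajmem : ∀ i, traj i ∈ unitSq)
    (htraj : ∀ i, traj (i + 1) = f (traj i))
    (d : ℕ)
    (happr : HasDistinctFractalApproachDirections (Set.range fun i => ψ (traj i)) P d) :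
    HasDistinctFractalApproachDirections (Set.range traj) p d :=
  statement13_general ψ hψ p hp P hP hinj hindep traj htrajmem d happr
end
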